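/- arXiv:2404.09268 — 6 statements merged into one kernel-verified Lean document; each statement's English description precedes it below -/
import Mathlib

section
/- Let G be a finite simple graph with at least two vertices, let H be an induced bipartite subgraph of G, and let V(H) = V₁ ∪ V₂ be a bipartition of the vertices of H into two (nonempty) independent sets. Then the smallest adjacency eigenvalue of G satisfies λ(G) ≤ -|E(H)| / √(|V₁|·|V₂|). -/
/-!
Common definitions: smallest adjacency eigenvalue, independent vertex sets,
edge counts of induced subgraphs, chromatic number, independence number,
and the invariants `η`, `ι`, `θ` from the paper.
-/

open Finset SimpleGraph Matrix

set_option linter.unusedSectionVars false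

variable {V : Type} [Fintype V] [DecidableEq V]

/-- A finite set of vertices is an independent set in `G`. -/
def IsIndepFinset (G : SimpleGraph V) (s : Finset V) : Prop :=
  ∀ u ∈ s, ∀ v ∈ s, ¬ G.Adj u v

/-- The adjacency matrix of a finite graph is Hermitian (over `ℝ`). -/
theorem adj_isHermitian (G : SimpleGraph V) [DecidableRel G.Adj] :
    (G.adjMatrix ℝ).IsHermitian := by
  rw [Matrix.IsHermitian, conjTranspose_eq_transpose_of_trivial]
  exact isSymm_adjMatrix G

/-- `λ(G)`: the smallest eigenvalue of the adjacency matrix of `G`. -/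
noncomputable def lambdaMin (G : SimpleGraph V) : ℝ :=
  letI := Classical.decRel G.Adj
  ⨅ i, (adj_isHermitian G).eigenvalues i

/-- `|E(G)|`: the number of edges of `G`. -/
noncomputable def edgeCount (G : SimpleGraph V) : ℕ := Nat.card G.edgeSet

/-- The number of edges of the subgraph of `G` induced on the vertex set `s`. -/
noncomputable def inducedEdgeCount (G : SimpleGraph V) (s : Finset V) : ℕ :=
  Nat.card (G.induce (s : Set V)).edgeSet

/-- `χ(G)`: the chromatic number of `G`, as a natural number. -/
noncomputable def chromNum (G : SimpleGraph V) : ℕ := G.chromaticNumber.toNat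

/-- `α(G)`: the independence number of `G`. -/
noncomputable def indepNum (G : SimpleGraph V) : ℕ :=
  sSup {k | ∃ s : Finset V, IsIndepFinset G s ∧ s.card = k}

/-- `θ(G) = min {n/2, α(G)}`. -/
noncomputable def theta (G : SimpleGraph V) : ℝ :=
  min ((Fintype.card V : ℝ) / 2) (_root_.indepNum G : ℝ)

/-- `η(G)`: the supremum of `|E(H)| / √(|V₁|·|V₂|)` over all induced bipartite
subgraphs `H` of `G` with bipartition into nonempty independent sets `V₁`, `V₂`. -/
noncomputable def eta (G : SimpleGraph V) : ℝ :=
  sSup {x : ℝ | ∃ V₁ V₂ : Finset V, V₁.Nonempty ∧ V₂.Nonempty ∧ Disjoint V₁ V₂ ∧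
    IsIndepFinset G V₁ ∧ IsIndepFinset G V₂ ∧
    x = (inducedEdgeCount G (V₁ ∪ V₂) : ℝ) / Real.sqrt ((V₁.card : ℝ) * (V₂.card : ℝ))}

/-- `ι(G)`: the supremum of the average degree `2|E(H)|/|V(H)|` over all nonempty
induced bipartite subgraphs `H` of `G`. -/
noncomputable def iota (G : SimpleGraph V) : ℝ :=
  sSup {x : ℝ | ∃ V₁ V₂ : Finset V, (V₁ ∪ V₂).Nonempty ∧ Disjoint V₁ V₂ ∧
    IsIndepFinset G V₁ ∧ IsIndepFinset G V₂ ∧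
    x = 2 * (inducedEdgeCount G (V₁ ∪ V₂) : ℝ) / ((V₁ ∪ V₂).card : ℝ)}

/-!
Let `a = |V₁|`, `b = |V₂|` and let `x` be the vector equal to `√b` on `V₁`, to `-√a` on `V₂` and
to `0` elsewhere. Since `V₁` and `V₂` are independent, only the edges of `H` contribute to the
quadratic form of the adjacency matrix, each with `2 · √b · (-√a)`, so `xᵀ A x = -2√(ab)·|E(H)|`,
while `xᵀ x = 2ab`. The Rayleigh bound `λ(G) · xᵀ x ≤ xᵀ A x` then gives the claim.
-/

open Finset SimpleGraph Matrix
open scoped MatrixOrder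

theorem Matrix.IsHermitian.iInf_eigenvalues_mul_dotProduct_le {n : Type*} [Fintype n]
    [DecidableEq n] {A : Matrix n n ℝ} (hA : A.IsHermitian) (x : n → ℝ) :
    (⨅ i, hA.eigenvalues i) * (x ⬝ᵥ x) ≤ x ⬝ᵥ (A *ᵥ x) := by
  have hle : algebraMap ℝ (Matrix n n ℝ) (⨅ i, hA.eigenvalues i) ≤ A := by
    rw [algebraMap_le_iff_le_spectrum hA.isSelfAdjoint, hA.spectrum_real_eq_range_eigenvalues]
    rintro _ ⟨i, rfl⟩
    exact ciInf_le (Finite.bddBelow_range _) i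
  simpa [sub_mulVec, dotProduct_sub, algebraMap_eq_diagonal, Pi.algebraMap_def] using
    (le_iff.mp hle).dotProduct_mulVec_nonneg x

theorem Matrix.indicator_dotProduct_mulVec_indicator {n R : Type*} [Fintype n]
    [NonAssocSemiring R] (A : Matrix n n R) (s t : Finset n) :
    (s : Set n).indicator 1 ⬝ᵥ (A *ᵥ (t : Set n).indicator 1) = ∑ i ∈ s, ∑ j ∈ t, A i j := by
  classical
  simp [dotProduct, mulVec, Set.indicator_apply, sum_ite_mem]

theorem Finset.indicator_dotProduct_indicator {n R : Type*} [Fintype n] [DecidableEq n]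
    [NonAssocSemiring R] (s t : Finset n) :
    (s : Set n).indicator (1 : n → R) ⬝ᵥ (t : Set n).indicator 1 = #(s ∩ t) := by
  simp [dotProduct, Set.indicator_apply, ← ite_and, sum_boole, filter_and, inter_comm]

theorem Finset.dotProduct_self_indicator_add_indicator {n R : Type*} [Fintype n] [DecidableEq n]
    [CommSemiring R] {s t : Finset n} (hst : Disjoint s t) (p q : R) :
    (p • (s : Set n).indicator 1 + q • (t : Set n).indicator 1) ⬝ᵥ
        (p • (s : Set n).indicator 1 + q • (t : Set n).indicator 1) =
      p ^ 2 * #s + q ^ 2 * #t := by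
  simp only [add_dotProduct, dotProduct_add, smul_dotProduct, dotProduct_smul,
    indicator_dotProduct_indicator, inter_self, disjoint_iff_inter_eq_empty.mp hst,
    disjoint_iff_inter_eq_empty.mp hst.symm, card_empty, smul_eq_mul]
  push_cast
  ring

namespace SimpleGraph

section

variable {α : Type*} (G : SimpleGraph α) [DecidableRel G.Adj]

theorem sum_sum_adjMatrix_eq_card_interedges [DecidableEq α] (R : Type*) [NonAssocSemiring R]
    (s t : Finset α) :
    ∑ i ∈ s, ∑ j ∈ t, G.adjMatrix R i j = #(G.interedges s t) := by
  simp only [adjMatrix_apply]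
  rw [← sum_product' (f := fun i j => if G.Adj i j then (1 : R) else 0), sum_boole]
  rfl

theorem card_interedges_comm (s t : Finset α) :
    #(G.interedges s t) = #(G.interedges t s) :=
  have := G.symm
  Rel.card_interedges_comm s t

end

variable {α : Type} (G : SimpleGraph α) [DecidableRel G.Adj] {s t : Finset α}

theorem interedges_self_eq_empty (hs : IsIndepFinset G s) : G.interedges s s = ∅ := by
  ext ⟨u, v⟩
  simpa [mk_mem_interedges_iff] using fun hu hv => hs u hu v hv

theorem dotProduct_adjMatrix_mulVec_indicator_add_indicator [Fintype α] [DecidableEq α]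
    (hs : IsIndepFinset G s) (ht : IsIndepFinset G t) (p q : ℝ) :
    (p • (s : Set α).indicator 1 + q • (t : Set α).indicator 1) ⬝ᵥ
        (G.adjMatrix ℝ *ᵥ (p • (s : Set α).indicator 1 + q • (t : Set α).indicator 1)) =
      2 * p * q * #(G.interedges s t) := by
  simp only [mulVec_add, mulVec_smul, add_dotProduct, dotProduct_add, smul_dotProduct,
    dotProduct_smul, indicator_dotProduct_mulVec_indicator, sum_sum_adjMatrix_eq_card_interedges,
    interedges_self_eq_empty G hs, interedges_self_eq_empty G ht, G.card_interedges_comm t s,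
    card_empty, smul_eq_mul]
  push_cast
  ring

theorem inducedEdgeCount_union_eq_card_interedges [Fintype α] [DecidableEq α]
    (hst : Disjoint s t) (hs : IsIndepFinset G s) (ht : IsIndepFinset G t) :
    inducedEdgeCount G (s ∪ t) = #(G.interedges s t) := by
  rw [inducedEdgeCount, Nat.card_eq_fintype_card, ← edgeFinset_card,
    ← card_filter_edgeFinset_toFinset_subset]
  symm
  refine card_bij (fun p _ => s(p.1, p.2)) ?_ ?_ ?_
  · rintro ⟨u, v⟩ huv
    rw [mk_mem_interedges_iff] at huv
    simp [huv, Sym2.toFinset_mk_eq, insert_subset_iff]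
  · rintro ⟨u, v⟩ huv ⟨u', v'⟩ huv' h
    rw [mk_mem_interedges_iff] at huv huv'
    rcases Sym2.eq_iff.mp h with ⟨rfl, rfl⟩ | ⟨rfl, -⟩
    · rfl
    · exact absurd huv'.2.1 (Finset.disjoint_left.mp hst huv.1)
  · intro e he
    induction e using Sym2.ind with
    | _ u v =>
      simp only [mem_filter, mem_edgeFinset, mem_edgeSet, Sym2.toFinset_mk_eq, insert_subset_iff,
        singleton_subset_iff, mem_union] at he
      obtain ⟨huv, hu | hu, hv | hv⟩ := he
      · exact absurd huv (hs u hu v hv)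
      · exact ⟨(u, v), G.mk_mem_interedges_iff.mpr ⟨hu, hv, huv⟩, rfl⟩
      · exact ⟨(v, u), G.mk_mem_interedges_iff.mpr ⟨hv, hu, huv.symm⟩, Sym2.eq_swap⟩
      · exact absurd huv (ht u hu v hv)

end SimpleGraph

theorem smallest_eigenvalue_le_of_induced_bipartite_general (G : SimpleGraph V)
    (V₁ V₂ : Finset V) (h₁ : V₁.Nonempty) (h₂ : V₂.Nonempty) (hdisj : Disjoint V₁ V₂)
    (hi₁ : IsIndepFinset G V₁) (hi₂ : IsIndepFinset G V₂) :
    lambdaMin G ≤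
      -(inducedEdgeCount G (V₁ ∪ V₂) : ℝ) / Real.sqrt ((V₁.card : ℝ) * (V₂.card : ℝ)) := by
  classical
  set a : ℝ := (V₁.card : ℝ)
  set b : ℝ := (V₂.card : ℝ)
  have ha : 0 < a := by simpa [a] using h₁.card_pos
  have hb : 0 < b := by simpa [b] using h₂.card_pos
  set x : V → ℝ := √b • (V₁ : Set V).indicator 1 + (-√a) • (V₂ : Set V).indicator 1
  have hquad : x ⬝ᵥ (G.adjMatrix ℝ *ᵥ x) = -(2 * √(a * b) * inducedEdgeCount G (V₁ ∪ V₂)) := by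
    rw [G.dotProduct_adjMatrix_mulVec_indicator_add_indicator hi₁ hi₂,
      G.inducedEdgeCount_union_eq_card_interedges hdisj hi₁ hi₂, Real.sqrt_mul ha.le]
    ring
  have hnorm : x ⬝ᵥ x = 2 * (a * b) := by
    rw [dotProduct_self_indicator_add_indicator hdisj, neg_sq, Real.sq_sqrt ha.le,
      Real.sq_sqrt hb.le]
    ring
  have hrayleigh : lambdaMin G * (x ⬝ᵥ x) ≤ x ⬝ᵥ (G.adjMatrix ℝ *ᵥ x) :=
    (adj_isHermitian G).iInf_eigenvalues_mul_dotProduct_le x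
  rw [hquad, hnorm] at hrayleigh
  have hsqrt : 0 < √(a * b) := Real.sqrt_pos.mpr (mul_pos ha hb)
  rw [le_div_iff₀ hsqrt]
  refine le_of_mul_le_mul_left ?_ (by positivity : 0 < 2 * √(a * b))
  linear_combination hrayleigh + 2 * lambdaMin G * Real.mul_self_sqrt (mul_pos ha hb).le

/-- Theorem 2.1. Let `G` be a graph with at least two vertices, and let
`H` be the induced bipartite subgraph of `G` on a bipartition `V₁ ∪ V₂` into nonempty
independent sets. Then `λ(G) ≤ -|E(H)| / √(|V₁|·|V₂|)`. -/
theorem smallest_eigenvalue_le_of_induced_bipartite (G : SimpleGraph V)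
    (hV : 2 ≤ Fintype.card V)
    (V₁ V₂ : Finset V) (h₁ : V₁.Nonempty) (h₂ : V₂.Nonempty) (hdisj : Disjoint V₁ V₂)
    (hi₁ : IsIndepFinset G V₁) (hi₂ : IsIndepFinset G V₂) :
    lambdaMin G ≤
      -(inducedEdgeCount G (V₁ ∪ V₂) : ℝ) / Real.sqrt ((V₁.card : ℝ) * (V₂.card : ℝ)) :=
  smallest_eigenvalue_le_of_induced_bipartite_general G V₁ V₂ h₁ h₂ hdisj hi₁ hi₂
end

section
/- Let G be a finite simple graph with at least two vertices and let H be a nonempty induced bipartite subgraph of G. Then λ(G) ≤ -d̄(H), where d̄(H) = 2|E(H)|/|V(H)| is the average degree of H. -/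
/-!
Evaluate the quadratic form of the adjacency matrix `A` at the vector `x` that is `1` on `V₁`,
`-1` on `V₂` and `0` elsewhere. Since `V₁` and `V₂` are independent, every edge of `H` joins
vertices of opposite signs, so `xᵀAx = -2|E(H)|`, while `xᵀx = |V(H)|`. The Rayleigh bound
`λ(G) · xᵀx ≤ xᵀAx` then gives `λ(G) ≤ -2|E(H)|/|V(H)|`.
-/

open Finset SimpleGraph Matrix

set_option linter.unusedSectionVars false

variable {V : Type} [Fintype V] [DecidableEq V]

namespace Matrix.IsHermitian
variable {n : Type*} [Fintype n] [DecidableEq n] {A : Matrix n n ℝ}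

lemma posSemidef_sub_iInf_eigenvalues_smul_one (hA : A.IsHermitian) :
    (A - (⨅ i, hA.eigenvalues i) • (1 : Matrix n n ℝ)).PosSemidef := by
  set c := ⨅ i, hA.eigenvalues i
  set U : Matrix n n ℝ := (hA.eigenvectorUnitary : Matrix n n ℝ)
  have hUU : U * star U = 1 := Matrix.mem_unitaryGroup_iff.mp hA.eigenvectorUnitary.2
  have hconj : A - c • 1 = U * diagonal (fun i => hA.eigenvalues i - c) * star U := by
    rw [← diagonal_sub, ← smul_one_eq_diagonal, mul_sub, sub_mul, mul_smul_comm, smul_mul_assoc,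
      mul_one, hUU]
    conv_lhs => rw [hA.spectral_theorem, Unitary.conjStarAlgAut_apply]
    rfl
  rw [hconj, Unitary.isUnit_coe.posSemidef_star_right_conjugate_iff, posSemidef_diagonal_iff]
  exact fun i => sub_nonneg.mpr (ciInf_le (Set.finite_range _).bddBelow i)

lemma iInf_eigenvalues_mul_dotProduct_self_le (hA : A.IsHermitian) (x : n → ℝ) :
    (⨅ i, hA.eigenvalues i) * (x ⬝ᵥ x) ≤ x ⬝ᵥ (A *ᵥ x) := by
  have := hA.posSemidef_sub_iInf_eigenvalues_smul_one.dotProduct_mulVec_nonneg x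
  simpa [sub_mulVec, smul_mulVec, dotProduct_sub, dotProduct_smul] using this

end Matrix.IsHermitian

lemma dotProduct_adjMatrix_mulVec {W α : Type*} [Fintype W] [CommSemiring α] (G : SimpleGraph W)
    [DecidableRel G.Adj] (x : W → α) :
    x ⬝ᵥ (G.adjMatrix α *ᵥ x) = ∑ u, ∑ v, if G.Adj u v then x u * x v else 0 := by
  simp [dotProduct, mulVec, adjMatrix_apply, Finset.mul_sum, mul_ite]

lemma two_mul_inducedEdgeCount (G : SimpleGraph V) [DecidableRel G.Adj] (s : Finset V) :
    2 * inducedEdgeCount G s = ∑ u ∈ s, #{v ∈ s | G.Adj u v} := by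
  rw [inducedEdgeCount, Nat.card_eq_fintype_card, ← edgeFinset_card,
    ← sum_degrees_eq_twice_card_edges,
    Finset.sum_subtype (p := (· ∈ (s : Set V))) s (fun _ => Iff.rfl)]
  refine Finset.sum_congr rfl fun u _ => ?_
  rw [← card_neighborFinset_eq_degree, ← Finset.card_map (Function.Embedding.subtype _)]
  congr 1
  ext v
  simp [and_comm]

section BipartitionSign

variable {W : Type*} [DecidableEq W] (V₁ V₂ : Finset W)

def bipartitionSign (v : W) : ℝ :=
  if v ∈ V₁ then 1 else if v ∈ V₂ then -1 else 0

lemma bipartitionSign_mul_self (v : W) :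
    bipartitionSign V₁ V₂ v * bipartitionSign V₁ V₂ v = if v ∈ V₁ ∪ V₂ then 1 else 0 := by
  unfold bipartitionSign
  split_ifs <;> simp_all

lemma dotProduct_self_bipartitionSign [Fintype W] :
    bipartitionSign V₁ V₂ ⬝ᵥ bipartitionSign V₁ V₂ = #(V₁ ∪ V₂) := by
  simp only [dotProduct, bipartitionSign_mul_self, Finset.sum_boole, Finset.filter_mem_eq_inter,
    univ_inter]

end BipartitionSign

lemma bipartitionSign_mul_of_adj {G : SimpleGraph V} {V₁ V₂ : Finset V}
    (hi₁ : IsIndepFinset G V₁) (hi₂ : IsIndepFinset G V₂) {u v : V} (huv : G.Adj u v) :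
    bipartitionSign V₁ V₂ u * bipartitionSign V₁ V₂ v =
      if u ∈ V₁ ∪ V₂ ∧ v ∈ V₁ ∪ V₂ then -1 else 0 := by
  have h₁ := hi₁ u
  have h₂ := hi₂ u
  unfold bipartitionSign
  split_ifs <;> simp_all

lemma dotProduct_adjMatrix_mulVec_bipartitionSign {G : SimpleGraph V} [DecidableRel G.Adj]
    {V₁ V₂ : Finset V} (hi₁ : IsIndepFinset G V₁) (hi₂ : IsIndepFinset G V₂) :
    bipartitionSign V₁ V₂ ⬝ᵥ (G.adjMatrix ℝ *ᵥ bipartitionSign V₁ V₂) =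
      -(2 * (inducedEdgeCount G (V₁ ∪ V₂) : ℝ)) := by
  have hterm : ∀ u v,
      (if G.Adj u v then bipartitionSign V₁ V₂ u * bipartitionSign V₁ V₂ v else 0) =
        if u ∈ V₁ ∪ V₂ then
          (if v ∈ V₁ ∪ V₂ then -(if G.Adj u v then 1 else 0 : ℝ) else 0)
        else 0 := by
    intro u v
    split_ifs <;> simp_all [bipartitionSign_mul_of_adj hi₁ hi₂]
  rw [dotProduct_adjMatrix_mulVec]
  simp only [hterm, Finset.sum_ite_irrel, Finset.sum_const_zero, Fintype.sum_ite_mem,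
    Finset.sum_neg_distrib, Finset.sum_boole]
  rw [neg_inj]
  exact_mod_cast (two_mul_inducedEdgeCount G (V₁ ∪ V₂)).symm

theorem smallest_eigenvalue_le_neg_avg_degree_general (G : SimpleGraph V)
    (V₁ V₂ : Finset V) (hne : (V₁ ∪ V₂).Nonempty)
    (hi₁ : IsIndepFinset G V₁) (hi₂ : IsIndepFinset G V₂) :
    lambdaMin G ≤
      -(2 * (inducedEdgeCount G (V₁ ∪ V₂) : ℝ) / ((V₁ ∪ V₂).card : ℝ)) := by
  classical
  have hcard : (0 : ℝ) < #(V₁ ∪ V₂) := by exact_mod_cast hne.card_pos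
  have key := (adj_isHermitian G).iInf_eigenvalues_mul_dotProduct_self_le (bipartitionSign V₁ V₂)
  rw [dotProduct_self_bipartitionSign, dotProduct_adjMatrix_mulVec_bipartitionSign hi₁ hi₂] at key
  rw [← neg_div, le_div_iff₀ hcard]
  exact key

/-- Theorem 2.4. Let `G` be a graph with at least two vertices and let
`H` be a nonempty induced bipartite subgraph of `G`, with bipartition `V₁ ∪ V₂` into
independent sets. Then `λ(G) ≤ -d̄(H)` where `d̄(H) = 2|E(H)|/|V(H)|`. -/
theorem smallest_eigenvalue_le_neg_avg_degree (G : SimpleGraph V)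
    (hV : 2 ≤ Fintype.card V)
    (V₁ V₂ : Finset V) (hne : (V₁ ∪ V₂).Nonempty) (hdisj : Disjoint V₁ V₂)
    (hi₁ : IsIndepFinset G V₁) (hi₂ : IsIndepFinset G V₂) :
    lambdaMin G ≤
      -(2 * (inducedEdgeCount G (V₁ ∪ V₂) : ℝ) / ((V₁ ∪ V₂).card : ℝ)) :=
  smallest_eigenvalue_le_neg_avg_degree_general G V₁ V₂ hne hi₁ hi₂
end

section
/- Let G₁ and G₂ be finite simple graphs, each with at least two vertices, such that λ(G₁) = -ι(G₁) and λ(G₂) = -ι(G₂). Then λ(G₁ □ G₂) = -ι(G₁ □ G₂), where G₁ □ G₂ denotes the Cartesian product of G₁ and G₂. -/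
/-!
Common definitions: smallest adjacency eigenvalue, independent vertex sets,
edge counts of induced subgraphs, chromatic number, independence number,
and the invariants `η`, `ι`, `θ` from the paper.
-/

open Finset SimpleGraph Matrix

set_option linter.unusedSectionVars false

variable {V : Type} [Fintype V] [DecidableEq V]

/-!
For a graph `G` and a real `c`, the matrix `A(G) - c • 1` is positive semidefinite exactly when
`c ≤ λ(G)`. Since `A(G₁ □ G₂) = A(G₁) ⊗ 1 + 1 ⊗ A(G₂)`, the matrix
`A(G₁ □ G₂) - (λ(G₁) + λ(G₂)) • 1 = (A(G₁) - λ(G₁) • 1) ⊗ 1 + 1 ⊗ (A(G₂) - λ(G₂) • 1)`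
is positive semidefinite, so `λ(G₁) + λ(G₂) ≤ λ(G₁ □ G₂)`. Evaluating the quadratic form of
`A(G)` at the `±1` vector of a bipartition `(V₁, V₂)` gives `λ(G) ≤ -ι(G)` for every graph.
Finally, bipartitions `(A₁, A₂)` of `G₁` and `(B₁, B₂)` of `G₂` combine into the bipartition
`(A₁ × B₁ ∪ A₂ × B₂, A₁ × B₂ ∪ A₂ × B₁)` of `(A₁ ∪ A₂) × (B₁ ∪ B₂)`, whose average degree is the sum
of the two average degrees, so `ι(G₁) + ι(G₂) ≤ ι(G₁ □ G₂)`. Hence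
`-ι(G₁ □ G₂) ≤ -ι(G₁) - ι(G₂) = λ(G₁) + λ(G₂) ≤ λ(G₁ □ G₂) ≤ -ι(G₁ □ G₂)`.
-/

open scoped Kronecker Pointwise

namespace Matrix

theorem IsHermitian.posSemidef_sub_smul_one_iff {n : Type*} [Fintype n] [DecidableEq n]
    {A : Matrix n n ℝ} (hA : A.IsHermitian) (c : ℝ) :
    (A - c • 1).PosSemidef ↔ ∀ i, c ≤ hA.eigenvalues i := by
  have hdiag : A - c • 1 = Unitary.conjStarAlgAut ℝ _ hA.eigenvectorUnitary
      (diagonal fun i => hA.eigenvalues i - c) := by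
    rw [← diagonal_sub, ← smul_one_eq_diagonal, map_sub, map_smul, map_one]
    conv_lhs => rw [hA.spectral_theorem]
    rfl
  rw [hdiag, Unitary.conjStarAlgAut_apply, Unitary.isUnit_coe.posSemidef_star_right_conjugate_iff,
    posSemidef_diagonal_iff]
  simp [sub_nonneg]

variable {m n R : Type*} [Fintype m] [Fintype n] [CommSemiring R]

theorem dotProduct_kronecker_vec (u u' : m → R) (v v' : n → R) :
    (fun p : m × n => u p.1 * v p.2) ⬝ᵥ (fun p => u' p.1 * v' p.2) = (u ⬝ᵥ u') * (v ⬝ᵥ v') := by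
  simp only [dotProduct, Fintype.sum_prod_type, Finset.sum_mul_sum]
  exact Finset.sum_congr rfl fun _ _ => Finset.sum_congr rfl fun _ _ => by ring

theorem kronecker_mulVec_kronecker_vec (A : Matrix m m R) (B : Matrix n n R) (u : m → R)
    (v : n → R) :
    (A ⊗ₖ B) *ᵥ (fun p => u p.1 * v p.2) = fun p => (A *ᵥ u) p.1 * (B *ᵥ v) p.2 := by
  ext ⟨i, j⟩
  simp only [mulVec, dotProduct, Fintype.sum_prod_type, kroneckerMap_apply, Finset.sum_mul_sum]
  exact Finset.sum_congr rfl fun _ _ => Finset.sum_congr rfl fun _ _ => by ring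

end Matrix

theorem Finset.indicator_one_dotProduct_self {ι : Type*} [Fintype ι] (s : Finset ι) :
    (s : Set ι).indicator (1 : ι → ℝ) ⬝ᵥ (s : Set ι).indicator 1 = #s := by
  classical
  simp [dotProduct, Set.indicator_apply]

theorem two_mul_inducedEdgeCount_s6 {W : Type} [Fintype W] (G : SimpleGraph W) [DecidableRel G.Adj]
    (s : Finset W) :
    2 * (inducedEdgeCount G s : ℝ) =
      (s : Set W).indicator 1 ⬝ᵥ G.adjMatrix ℝ *ᵥ (s : Set W).indicator 1 := by
  classical
  have hdart := (G.induce (s : Set W)).natCast_card_dart_eq_dotProduct (α := ℝ)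
  rw [dart_card_eq_twice_card_edges] at hdart
  rw [inducedEdgeCount, Nat.card_eq_fintype_card, ← edgeFinset_card]
  push_cast at hdart
  rw [hdart, dotProduct_comm, dotProduct_mulVec_adjMatrix, dotProduct_mulVec_adjMatrix]
  simp only [Pi.one_apply, mul_one, comap_adj, Function.Embedding.subtype_apply,
    Set.indicator_apply, Finset.mem_coe, mul_ite, mul_zero]
  have hreorder : ∀ x y, (if G.Adj x y then if y ∈ s then if x ∈ s then (1 : ℝ) else 0 else 0
      else 0) = if x ∈ s then if y ∈ s then if G.Adj x y then 1 else 0 else 0 else 0 := by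
    intro x y
    split_ifs <;> rfl
  simp only [hreorder, Finset.sum_ite_irrel, Finset.sum_const_zero, Finset.sum_ite_mem,
    Finset.univ_inter]
  rw [← Finset.sum_coe_sort s]
  refine Finset.sum_congr rfl fun x _ => ?_
  rw [← Finset.sum_coe_sort s]

theorem lambdaMin_eq_iInf (G : SimpleGraph V) [DecidableRel G.Adj] :
    lambdaMin G = ⨅ i, (adj_isHermitian G).eigenvalues i := by
  unfold lambdaMin
  congr!

theorem le_lambdaMin_iff [Nonempty V] (G : SimpleGraph V) [DecidableRel G.Adj] (c : ℝ) :
    c ≤ lambdaMin G ↔ (G.adjMatrix ℝ - c • 1).PosSemidef := by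
  rw [lambdaMin_eq_iInf, le_ciInf_iff (Set.finite_range _).bddBelow,
    (adj_isHermitian G).posSemidef_sub_smul_one_iff]

theorem lambdaMin_mul_dotProduct_le [Nonempty V] (G : SimpleGraph V) [DecidableRel G.Adj]
    (x : V → ℝ) : lambdaMin G * (x ⬝ᵥ x) ≤ x ⬝ᵥ G.adjMatrix ℝ *ᵥ x := by
  have := ((le_lambdaMin_iff G _).1 le_rfl).dotProduct_mulVec_nonneg x
  simpa [sub_mulVec, smul_mulVec, dotProduct_sub, dotProduct_smul] using this

theorem lambdaMin_mul_card_le_of_isIndepFinset [Nonempty V] (G : SimpleGraph V)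
    {V₁ V₂ : Finset V} (hd : Disjoint V₁ V₂) (h₁ : IsIndepFinset G V₁)
    (h₂ : IsIndepFinset G V₂) :
    lambdaMin G * #(V₁ ∪ V₂) ≤ -(2 * inducedEdgeCount G (V₁ ∪ V₂)) := by
  classical
  set f : V → ℝ := (V₁ : Set V).indicator 1 - (V₂ : Set V).indicator 1
  set g : V → ℝ := ((V₁ ∪ V₂ : Finset V) : Set V).indicator 1
  have hfg : ∀ i, f i * f i = g i * g i := by
    intro i
    have : i ∈ V₁ → i ∉ V₂ := fun h => Finset.disjoint_left.1 hd h
    by_cases hi₁ : i ∈ V₁ <;> by_cases hi₂ : i ∈ V₂ <;> simp_all [f, g]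
  -- every edge inside `V₁ ∪ V₂` joins `V₁` to `V₂`, where `f` takes opposite signs
  have hfg_adj : ∀ i j, G.Adj i j → f i * f j = -(g i * g j) := by
    intro i j hij
    have : i ∈ V₁ → i ∉ V₂ := fun h => Finset.disjoint_left.1 hd h
    have : j ∈ V₁ → j ∉ V₂ := fun h => Finset.disjoint_left.1 hd h
    have : i ∈ V₁ → j ∉ V₁ := fun hi hj => h₁ i hi j hj hij
    have : i ∈ V₂ → j ∉ V₂ := fun hi hj => h₂ i hi j hj hij
    by_cases hi₁ : i ∈ V₁ <;> by_cases hi₂ : i ∈ V₂ <;> by_cases hj₁ : j ∈ V₁ <;>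
      by_cases hj₂ : j ∈ V₂ <;> simp_all [f, g]
  have hff : f ⬝ᵥ f = g ⬝ᵥ g := Finset.sum_congr rfl fun i _ => hfg i
  have hfAf : f ⬝ᵥ G.adjMatrix ℝ *ᵥ f = -(g ⬝ᵥ G.adjMatrix ℝ *ᵥ g) := by
    simp only [dotProduct_mulVec_adjMatrix, ← Finset.sum_neg_distrib]
    refine Finset.sum_congr rfl fun i _ => Finset.sum_congr rfl fun j _ => ?_
    split_ifs with hij
    exacts [hfg_adj i j hij, neg_zero.symm]
  have h := lambdaMin_mul_dotProduct_le G f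
  rwa [hff, hfAf, Finset.indicator_one_dotProduct_self, ← two_mul_inducedEdgeCount_s6] at h

def iotaSet (G : SimpleGraph V) : Set ℝ :=
  {x : ℝ | ∃ V₁ V₂ : Finset V, (V₁ ∪ V₂).Nonempty ∧ Disjoint V₁ V₂ ∧
    IsIndepFinset G V₁ ∧ IsIndepFinset G V₂ ∧
    x = 2 * (inducedEdgeCount G (V₁ ∪ V₂) : ℝ) / ((V₁ ∪ V₂).card : ℝ)}

theorem iotaSet_nonempty {W : Type} [DecidableEq W] [Nonempty W] (G : SimpleGraph W) :
    (iotaSet G).Nonempty := by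
  obtain ⟨v⟩ := ‹Nonempty W›
  exact ⟨_, {v}, ∅, by simp, Finset.disjoint_empty_right _,
    fun a ha b hb => by simp_all, fun a ha => by simp at ha, rfl⟩

theorem le_neg_lambdaMin_of_mem_iotaSet [Nonempty V] {G : SimpleGraph V} {x : ℝ}
    (hx : x ∈ iotaSet G) : x ≤ -lambdaMin G := by
  obtain ⟨V₁, V₂, hne, hd, h₁, h₂, rfl⟩ := hx
  have hpos : (0 : ℝ) < #(V₁ ∪ V₂) := by exact_mod_cast hne.card_pos
  rw [div_le_iff₀ hpos]
  linarith [lambdaMin_mul_card_le_of_isIndepFinset G hd h₁ h₂]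

theorem iotaSet_bddAbove [Nonempty V] (G : SimpleGraph V) : BddAbove (iotaSet G) :=
  ⟨-lambdaMin G, fun _ => le_neg_lambdaMin_of_mem_iotaSet⟩

theorem lambdaMin_le_neg_iota [Nonempty V] (G : SimpleGraph V) : lambdaMin G ≤ -iota G :=
  le_neg_of_le_neg <| csSup_le (iotaSet_nonempty G) fun _ => le_neg_lambdaMin_of_mem_iotaSet

section BoxProd

variable {α β : Type} (G₁ : SimpleGraph α) (G₂ : SimpleGraph β)

theorem adjMatrix_boxProd {R : Type*} [NonAssocSemiring R] [DecidableEq α] [DecidableEq β]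
    [DecidableRel G₁.Adj] [DecidableRel G₂.Adj] [DecidableRel (G₁ □ G₂).Adj] :
    (G₁ □ G₂).adjMatrix R = G₁.adjMatrix R ⊗ₖ 1 + 1 ⊗ₖ G₂.adjMatrix R := by
  ext ⟨a, b⟩ ⟨a', b'⟩
  by_cases ha : a = a' <;> by_cases hb : b = b' <;>
    simp [adjMatrix_apply, boxProd_adj, kroneckerMap_apply, one_apply, ha, hb]

theorem lambdaMin_add_le_lambdaMin_boxProd [Fintype α] [DecidableEq α] [Nonempty α] [Fintype β]
    [DecidableEq β] [Nonempty β] :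
    lambdaMin G₁ + lambdaMin G₂ ≤ lambdaMin (G₁ □ G₂) := by
  classical
  have h₁ := (le_lambdaMin_iff G₁ _).1 le_rfl
  have h₂ := (le_lambdaMin_iff G₂ _).1 le_rfl
  have hdecomp : (G₁ □ G₂).adjMatrix ℝ - (lambdaMin G₁ + lambdaMin G₂) • 1 =
      (G₁.adjMatrix ℝ - lambdaMin G₁ • 1) ⊗ₖ 1 + 1 ⊗ₖ (G₂.adjMatrix ℝ - lambdaMin G₂ • 1) := by
    rw [adjMatrix_boxProd, ← one_kronecker_one, sub_eq_add_neg (adjMatrix ℝ G₁),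
      sub_eq_add_neg (adjMatrix ℝ G₂), ← neg_smul, ← neg_smul]
    simp only [add_kronecker, kronecker_add, smul_kronecker, kronecker_smul]
    module
  rw [le_lambdaMin_iff, hdecomp]
  exact (h₁.kronecker .one).add (PosSemidef.one.kronecker h₂)

theorem inducedEdgeCount_boxProd_product [Fintype α] [DecidableEq α] [Fintype β] [DecidableEq β]
    (S : Finset α) (T : Finset β) :
    inducedEdgeCount (G₁ □ G₂) (S ×ˢ T) =
      #T * inducedEdgeCount G₁ S + #S * inducedEdgeCount G₂ T := by
  classical
  have hind : ((S ×ˢ T : Finset (α × β)) : Set (α × β)).indicator (1 : α × β → ℝ) =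
      fun p => (S : Set α).indicator 1 p.1 * (T : Set β).indicator 1 p.2 := by
    ext ⟨a, b⟩
    rw [Finset.coe_product, Set.indicator_prod_one]
  have h := two_mul_inducedEdgeCount_s6 (G₁ □ G₂) (S ×ˢ T)
  rw [hind, adjMatrix_boxProd, add_mulVec, dotProduct_add, kronecker_mulVec_kronecker_vec,
    kronecker_mulVec_kronecker_vec, one_mulVec, one_mulVec, dotProduct_kronecker_vec,
    dotProduct_kronecker_vec, ← two_mul_inducedEdgeCount_s6, ← two_mul_inducedEdgeCount_s6,
    Finset.indicator_one_dotProduct_self, Finset.indicator_one_dotProduct_self] at h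
  exact_mod_cast (by linarith : (inducedEdgeCount (G₁ □ G₂) (S ×ˢ T) : ℝ) =
      #T * inducedEdgeCount G₁ S + #S * inducedEdgeCount G₂ T)

theorem isIndepFinset_boxProd_union [DecidableEq α] [DecidableEq β] {A A' : Finset α}
    {B B' : Finset β} (hA : IsIndepFinset G₁ A) (hA' : IsIndepFinset G₁ A')
    (hB : IsIndepFinset G₂ B) (hB' : IsIndepFinset G₂ B') (hAA' : Disjoint A A')
    (hBB' : Disjoint B B') :
    IsIndepFinset (G₁ □ G₂) (A ×ˢ B ∪ A' ×ˢ B') := by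
  rintro ⟨a, b⟩ hp ⟨a', b'⟩ hq hadj
  simp only [Finset.mem_union, Finset.mem_product] at hp hq
  rcases hadj with ⟨ha, rfl⟩ | ⟨hb, rfl⟩
  · rcases hp with ⟨h₁, h₂⟩ | ⟨h₁, h₂⟩ <;> rcases hq with ⟨h₃, h₄⟩ | ⟨h₃, h₄⟩
    exacts [hA _ h₁ _ h₃ ha, Finset.disjoint_left.1 hBB' h₂ h₄, Finset.disjoint_left.1 hBB' h₄ h₂,
      hA' _ h₁ _ h₃ ha]
  · rcases hp with ⟨h₁, h₂⟩ | ⟨h₁, h₂⟩ <;> rcases hq with ⟨h₃, h₄⟩ | ⟨h₃, h₄⟩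
    exacts [hB _ h₂ _ h₄ hb, Finset.disjoint_left.1 hAA' h₁ h₃, Finset.disjoint_left.1 hAA' h₃ h₁,
      hB' _ h₂ _ h₄ hb]

theorem iotaSet_add_subset_iotaSet_boxProd [Fintype α] [DecidableEq α] [Fintype β]
    [DecidableEq β] : iotaSet G₁ + iotaSet G₂ ⊆ iotaSet (G₁ □ G₂) := by
  rintro _ ⟨_, ⟨A₁, A₂, hA, hdA, hA₁, hA₂, rfl⟩, _, ⟨B₁, B₂, hB, hdB, hB₁, hB₂, rfl⟩, rfl⟩
  have hunion : (A₁ ×ˢ B₁ ∪ A₂ ×ˢ B₂) ∪ (A₁ ×ˢ B₂ ∪ A₂ ×ˢ B₁) = (A₁ ∪ A₂) ×ˢ (B₁ ∪ B₂) := by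
    ext
    simp only [Finset.mem_union, Finset.mem_product]
    tauto
  refine ⟨A₁ ×ˢ B₁ ∪ A₂ ×ˢ B₂, A₁ ×ˢ B₂ ∪ A₂ ×ˢ B₁, hunion ▸ hA.product hB, ?_,
    isIndepFinset_boxProd_union G₁ G₂ hA₁ hA₂ hB₁ hB₂ hdA hdB,
    isIndepFinset_boxProd_union G₁ G₂ hA₁ hA₂ hB₂ hB₁ hdA hdB.symm, ?_⟩
  · rw [Finset.disjoint_left] at hdA hdB ⊢
    simp only [Finset.mem_union, Finset.mem_product]
    grind
  · have hpA : (0 : ℝ) < #(A₁ ∪ A₂) := by exact_mod_cast hA.card_pos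
    have hpB : (0 : ℝ) < #(B₁ ∪ B₂) := by exact_mod_cast hB.card_pos
    rw [hunion, inducedEdgeCount_boxProd_product, Finset.card_product]
    field_simp
    push_cast
    ring

theorem iota_add_le_iota_boxProd [Fintype α] [DecidableEq α] [Nonempty α] [Fintype β]
    [DecidableEq β] [Nonempty β] : iota G₁ + iota G₂ ≤ iota (G₁ □ G₂) := by
  change sSup (iotaSet G₁) + sSup (iotaSet G₂) ≤ sSup (iotaSet (G₁ □ G₂))
  rw [← csSup_add (iotaSet_nonempty G₁) (iotaSet_bddAbove G₁) (iotaSet_nonempty G₂)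
    (iotaSet_bddAbove G₂)]
  exact csSup_le_csSup (iotaSet_bddAbove _) ((iotaSet_nonempty G₁).add (iotaSet_nonempty G₂))
    (iotaSet_add_subset_iotaSet_boxProd G₁ G₂)

end BoxProd

/-- Proposition 3.1. If `λ(G₁) = -ι(G₁)` and `λ(G₂) = -ι(G₂)`, then
`λ(G₁ □ G₂) = -ι(G₁ □ G₂)` for the Cartesian (box) product. -/
theorem lambdaMin_boxProd_eq_neg_iota {α β : Type} [Fintype α] [DecidableEq α]
    [Fintype β] [DecidableEq β] (G₁ : SimpleGraph α) (G₂ : SimpleGraph β)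
    (hα : 2 ≤ Fintype.card α) (hβ : 2 ≤ Fintype.card β)
    (h₁ : lambdaMin G₁ = -iota G₁) (h₂ : lambdaMin G₂ = -iota G₂) :
    lambdaMin (G₁ □ G₂) = -iota (G₁ □ G₂) := by
  have : Nonempty α := Fintype.card_pos_iff.mp (by omega)
  have : Nonempty β := Fintype.card_pos_iff.mp (by omega)
  refine le_antisymm (lambdaMin_le_neg_iota _) ?_
  calc -iota (G₁ □ G₂) ≤ -(iota G₁ + iota G₂) := neg_le_neg (iota_add_le_iota_boxProd G₁ G₂)
    _ = lambdaMin G₁ + lambdaMin G₂ := by rw [h₁, h₂, neg_add]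
    _ ≤ lambdaMin (G₁ □ G₂) := lambdaMin_add_le_lambdaMin_boxProd G₁ G₂
end

section
/- Let d ≥ 1 and t ≥ 1, and let G be a d-regular bipartite simple graph on 2t vertices whose bipartition has two parts of size t each. Then the independence number of G equals t, the smallest adjacency eigenvalue of G equals -d, and hence λ(G) = -|E(G)| / (C(χ(G), 2) · θ(G)); i.e., the bound λ(G) ≤ -|E(G)|/(C(χ(G),2)·θ(G)) holds with equality. -/
/-!
Common definitions: smallest adjacency eigenvalue, independent vertex sets,
edge counts of induced subgraphs, chromatic number, independence number,
and the invariants `η`, `ι`, `θ` from the paper.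
-/

open Finset SimpleGraph Matrix

set_option linter.unusedSectionVars false

variable {V : Type} [Fintype V] [DecidableEq V]

/-! A vertex of `A` has all its `d` neighbours in `B`, so the sign vector of the bipartition
(`1` on `A`, `-1` on `B`) is an eigenvector of the adjacency matrix for `-d`, while Gershgorin's
theorem puts every eigenvalue in `[-d, d]`; hence `λ(G) = -d`. For an independent set `I`, all
`d` neighbours of a vertex of `I ∩ A` lie in `B \ I`, and a vertex of `B \ I` has at most `d`
neighbours, so double counting gives `|I ∩ A| ≤ |B \ I|`, i.e. `|I| ≤ |B| = t`. With
`χ(G) = 2`, `θ(G) = t` and `|E(G)| = dt`, the bound becomes `-d = -dt / t`. -/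

theorem Matrix.IsHermitian.mem_range_eigenvalues_of_mulVec_eq {n : Type*} [Fintype n]
    [DecidableEq n] {M : Matrix n n ℝ} (hM : M.IsHermitian) {x : n → ℝ} (hx : x ≠ 0) {μ : ℝ}
    (h : M *ᵥ x = μ • x) : μ ∈ Set.range hM.eigenvalues := by
  rw [← hM.spectrum_real_eq_range_eigenvalues, ← spectrum_toLin',
    ← Module.End.hasEigenvalue_iff_mem_spectrum]
  exact Module.End.hasEigenvalue_of_hasEigenvector ⟨by simpa [Module.End.mem_eigenspace_iff], hx⟩

section

variable {G : SimpleGraph V}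

lemma edgeCount_eq_card_edgeFinset [DecidableRel G.Adj] : edgeCount G = #G.edgeFinset := by
  rw [edgeCount, Nat.card_eq_fintype_card, edgeFinset_card]

lemma lambdaMin_eq_iInf_eigenvalues [DecidableRel G.Adj] :
    lambdaMin G = ⨅ i, (adj_isHermitian G).eigenvalues i := by
  unfold lambdaMin
  congr!

lemma indepNum_eq_card {s : Finset V} (hs : IsIndepFinset G s)
    (hmax : ∀ I, IsIndepFinset G I → #I ≤ #s) : _root_.indepNum G = #s := by
  have hbdd : BddAbove {k | ∃ I : Finset V, IsIndepFinset G I ∧ #I = k} := by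
    refine ⟨#s, ?_⟩
    rintro _ ⟨I, hI, rfl⟩
    exact hmax I hI
  refine le_antisymm (csSup_le ⟨_, s, hs, rfl⟩ ?_) (le_csSup hbdd ⟨s, hs, rfl⟩)
  rintro _ ⟨I, hI, rfl⟩
  exact hmax I hI

lemma chromNum_eq_two (h : G.IsBipartite) (hne : G ≠ ⊥) : chromNum G = 2 := by
  rw [chromNum, chromaticNumber_eq_two_iff.mpr ⟨h, hne⟩]
  rfl

end


namespace SimpleGraph

variable {G : SimpleGraph V} [DecidableRel G.Adj] {d : ℕ}

lemma abs_le_of_hasEigenvalue_adjMatrix (hdeg : ∀ v, G.degree v ≤ d) {μ : ℝ}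
    (hμ : Module.End.HasEigenvalue (toLin' (G.adjMatrix ℝ)) μ) : |μ| ≤ d := by
  obtain ⟨k, hk⟩ := eigenvalue_mem_ball hμ
  have hrow : ∑ j ∈ univ.erase k, ‖G.adjMatrix ℝ k j‖ = G.degree k := by
    rw [sum_erase _ (by simp)]
    simp [adjMatrix_apply, apply_ite, ← card_neighborFinset_eq_degree, neighborFinset_eq_filter]
  rw [Metric.mem_closedBall, hrow, adjMatrix_apply, if_neg (G.irrefl), Real.dist_eq,
    sub_zero] at hk
  exact hk.trans (by exact_mod_cast hdeg k)

lemma neg_le_eigenvalues_adjMatrix (hdeg : ∀ v, G.degree v ≤ d) (i : V) :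
    -(d : ℝ) ≤ (adj_isHermitian G).eigenvalues i := by
  have hμ : Module.End.HasEigenvalue (toLin' (G.adjMatrix ℝ))
      ((adj_isHermitian G).eigenvalues i) := by
    rw [Module.End.hasEigenvalue_iff_mem_spectrum, spectrum_toLin']
    exact (adj_isHermitian G).eigenvalues_mem_spectrum_real i
  exact neg_le_of_abs_le (abs_le_of_hasEigenvalue_adjMatrix hdeg hμ)

lemma isBipartiteWith_of_isIndepFinset {s t : Finset V} (hdisj : Disjoint s t)
    (hcover : s ∪ t = univ) (hs : IsIndepFinset G s) (ht : IsIndepFinset G t) :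
    G.IsBipartiteWith s t := by
  refine ⟨Finset.disjoint_coe.mpr hdisj, fun v w hvw => ?_⟩
  have hmem : ∀ u, u ∈ s ∨ u ∈ t := fun u => Finset.mem_union.mp (hcover ▸ mem_univ u)
  simp only [Finset.mem_coe]
  rcases hmem v with hv | hv
  · exact .inl ⟨hv, (hmem w).resolve_left fun hw => hs v hv w hw hvw⟩
  · exact .inr ⟨hv, (hmem w).resolve_right fun hw => ht v hv w hw hvw⟩

lemma IsBipartiteWith.adjMatrix_mulVec_sign {s t : Finset V} (h : G.IsBipartiteWith s t)
    (hcover : s ∪ t = univ) (hreg : G.IsRegularOfDegree d) :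
    G.adjMatrix ℝ *ᵥ (fun v => if v ∈ s then 1 else -1) =
      -(d : ℝ) • fun v => if v ∈ s then 1 else -1 := by
  ext v
  rw [adjMatrix_mulVec_apply, Pi.smul_apply, smul_eq_mul]
  by_cases hv : v ∈ s
  · have hnb : ∀ u ∈ G.neighborFinset v, u ∉ s := fun u hu =>
      Finset.disjoint_left.mp (isBipartiteWith_neighborFinset_disjoint h hv) hu
    rw [sum_congr rfl fun u hu => if_neg (hnb u hu), sum_const, card_neighborFinset_eq_degree,
      hreg v, if_pos hv]
    simp
  · have hvt : v ∈ t := (Finset.mem_union.mp (hcover ▸ mem_univ v)).resolve_left hv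
    have hnb : ∀ u ∈ G.neighborFinset v, u ∈ s := fun u hu =>
      isBipartiteWith_neighborFinset_subset' h hvt hu
    rw [sum_congr rfl fun u hu => if_pos (hnb u hu), sum_const, card_neighborFinset_eq_degree,
      hreg v, if_neg hv]
    simp

lemma IsBipartiteWith.lambdaMin_eq {s t : Finset V} (h : G.IsBipartiteWith s t)
    (hcover : s ∪ t = univ) (hs : s.Nonempty) (hreg : G.IsRegularOfDegree d) :
    lambdaMin G = -d := by
  obtain ⟨v, hv⟩ := hs
  have : Nonempty V := ⟨v⟩
  have hsign : (fun v => if v ∈ s then (1 : ℝ) else -1) ≠ 0 := fun h0 => by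
    simpa [hv] using congrFun h0 v
  obtain ⟨i, hi⟩ := (adj_isHermitian G).mem_range_eigenvalues_of_mulVec_eq hsign
    (h.adjMatrix_mulVec_sign hcover hreg)
  rw [lambdaMin_eq_iInf_eigenvalues]
  refine IsGLB.ciInf_eq (IsLeast.isGLB ⟨⟨i, hi⟩, ?_⟩)
  rintro _ ⟨j, rfl⟩
  exact neg_le_eigenvalues_adjMatrix (fun v => (hreg v).le) j

lemma IsRegularOfDegree.card_le_card_of_neighborFinset_subset (hreg : G.IsRegularOfDegree d)
    (hd : 0 < d) {X Y : Finset V} (h : ∀ x ∈ X, G.neighborFinset x ⊆ Y) : #X ≤ #Y := by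
  refine Nat.le_of_mul_le_mul_right (card_mul_le_card_mul G.Adj (m := d) (n := d)
    (fun x hx => ?_) (fun y _ => ?_)) hd
  · have hY : Y.bipartiteAbove G.Adj x = G.neighborFinset x := by
      ext w
      simp only [bipartiteAbove, mem_filter, mem_neighborFinset]
      exact ⟨And.right, fun hw => ⟨h x hx ((mem_neighborFinset _ _ _).mpr hw), hw⟩⟩
    rw [hY, card_neighborFinset_eq_degree, hreg x]
  · rw [← hreg y, ← card_neighborFinset_eq_degree]
    refine card_le_card fun w hw => ?_
    exact (mem_neighborFinset _ _ _).mpr (mem_filter.mp hw).2.symm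

lemma IsBipartiteWith.card_le_of_isIndepFinset {s t I : Finset V} (h : G.IsBipartiteWith s t)
    (hcover : s ∪ t = univ) (hreg : G.IsRegularOfDegree d) (hd : 0 < d)
    (hI : IsIndepFinset G I) : #I ≤ #t := by
  have hmatch : #(I ∩ s) ≤ #(t \ I) := by
    refine hreg.card_le_card_of_neighborFinset_subset hd fun x hx w hw => ?_
    obtain ⟨hxI, hxs⟩ := mem_inter.mp hx
    exact mem_sdiff.mpr ⟨isBipartiteWith_neighborFinset_subset h hxs hw,
      fun hwI => hI x hxI w hwI ((mem_neighborFinset _ _ _).mp hw)⟩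
  calc #I = #(I ∩ s ∪ I ∩ t) := by rw [← inter_union_distrib_left, hcover, inter_univ]
    _ ≤ #(I ∩ s) + #(t ∩ I) := by rw [inter_comm I t]; exact card_union_le _ _
    _ ≤ #(t \ I) + #(t ∩ I) := by gcongr
    _ = #t := card_sdiff_add_card_inter t I

lemma IsBipartiteWith.card_edgeFinset_eq {s t : Finset V} (h : G.IsBipartiteWith s t)
    (hreg : G.IsRegularOfDegree d) : #G.edgeFinset = d * #s := by
  rw [← isBipartiteWith_sum_degrees_eq_card_edges h, sum_congr rfl fun v _ => hreg v, sum_const,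
    smul_eq_mul, mul_comm]

end SimpleGraph

/-- Subsection 3.2. Let `G` be a `d`-regular bipartite graph on `2t`
vertices whose bipartition `A ∪ B` has parts of size `t`. Then `α(G) = t`, `λ(G) = -d`,
and the bound of Theorem 2.7 holds with equality:
`λ(G) = -|E(G)| / (C(χ(G), 2) · θ(G))`. -/
theorem regular_bipartite_bound_sharp (G : SimpleGraph V) [DecidableRel G.Adj]
    (d t : ℕ) (hd : 1 ≤ d) (ht : 1 ≤ t) (hcard : Fintype.card V = 2 * t)
    (A B : Finset V) (hdisj : Disjoint A B) (hunion : A ∪ B = Finset.univ)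
    (hA : A.card = t) (hB : B.card = t)
    (hiA : IsIndepFinset G A) (hiB : IsIndepFinset G B)
    (hreg : ∀ v : V, G.degree v = d) :
    _root_.indepNum G = t ∧ lambdaMin G = -(d : ℝ) ∧
      lambdaMin G = -(edgeCount G : ℝ) / (((chromNum G).choose 2 : ℝ) * theta G) := by
  have hbip : G.IsBipartiteWith A B := isBipartiteWith_of_isIndepFinset hdisj hunion hiA hiB
  obtain ⟨a, ha⟩ : A.Nonempty := card_pos.mp (by omega)
  have hindep : _root_.indepNum G = t := hA ▸ indepNum_eq_card hiA fun I hI =>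
    hA ▸ hB ▸ hbip.card_le_of_isIndepFinset hunion hreg hd hI
  have hlam : lambdaMin G = -d := hbip.lambdaMin_eq hunion ⟨a, ha⟩ hreg
  have hne : G ≠ ⊥ := ne_bot_iff_exists_adj.mpr
    ⟨a, (G.degree_pos_iff_exists_adj a).mp (by rw [hreg a]; exact hd)⟩
  have hE : edgeCount G = d * t := by
    rw [edgeCount_eq_card_edgeFinset, hbip.card_edgeFinset_eq hreg, hA]
  have htheta : theta G = t := by
    rw [theta, hindep, hcard, Nat.cast_mul, Nat.cast_ofNat, mul_div_cancel_left₀ _ two_ne_zero,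
      min_self]
  refine ⟨hindep, hlam, ?_⟩
  rw [hlam, hE, chromNum_eq_two hbip.isBipartite hne, htheta]
  have ht0 : (t : ℝ) ≠ 0 := Nat.cast_ne_zero.mpr (by omega)
  rw [Nat.choose_self, Nat.cast_one, one_mul, Nat.cast_mul, neg_div, mul_div_cancel_right₀ _ ht0]
end

section
/- For a positive integer s, let H_s = 2K_s * 2K_s be the join of two copies of the disjoint union of two complete graphs K_s. Then every induced bipartite subgraph of H_s has at most four vertices, and η(H_s) = 2. -/
/-!
Common definitions: smallest adjacency eigenvalue, independent vertex sets,
edge counts of induced subgraphs, chromatic number, independence number,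
and the invariants `η`, `ι`, `θ` from the paper.
-/

open Finset SimpleGraph Matrix

set_option linter.unusedSectionVars false

variable {V : Type} [Fintype V] [DecidableEq V]

/-- The join `G₁ * G₂` of two graphs: their disjoint union together with all the
edges between the two vertex sets. -/
def graphJoin {α β : Type} (G₁ : SimpleGraph α) (G₂ : SimpleGraph β) :
    SimpleGraph (α ⊕ β) where
  Adj u v :=
    match u, v with
    | Sum.inl a, Sum.inl a' => G₁.Adj a a'
    | Sum.inr b, Sum.inr b' => G₂.Adj b b'
    | Sum.inl _, Sum.inr _ => True
    | Sum.inr _, Sum.inl _ => True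
  symm := ⟨by rintro (a | b) (a' | b') h <;> first | exact h.symm | trivial⟩
  loopless := ⟨by rintro (a | b) h <;> first | exact G₁.irrefl h | exact G₂.irrefl h⟩

/-- `2Kₛ`: the disjoint union of two copies of the complete graph `Kₛ`
(the copies are indexed by `Fin 2`). -/
def twoComplete (s : ℕ) : SimpleGraph (Fin 2 × Fin s) where
  Adj u v := u.1 = v.1 ∧ u.2 ≠ v.2
  symm := ⟨fun _ _ h => ⟨h.1.symm, h.2.symm⟩⟩
  loopless := ⟨fun _ h => h.2 rfl⟩

/-- `Hₛ = 2Kₛ * 2Kₛ`: the join of two copies of `2Kₛ` (Example 3.4). -/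
def paperGraphH (s : ℕ) : SimpleGraph ((Fin 2 × Fin s) ⊕ (Fin 2 × Fin s)) :=
  graphJoin (twoComplete s) (twoComplete s)

/-!
The vertex set of `Hₛ` is covered by two cliques: the `i`-th copy of `Kₛ` on the left together
with the `i`-th copy of `Kₛ` on the right. Hence an independent set of `Hₛ` has at most two
vertices, an induced bipartite subgraph at most four, and `|E(H)| ≤ |V₁||V₂|` gives
`|E(H)| / √(|V₁||V₂|) ≤ √(|V₁||V₂|) ≤ 2`. Equality is attained by two vertices from distinct
copies of `Kₛ` on each side, which span a `K₂,₂`.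
-/

theorem IsIndepFinset.card_le_of_adj_of_map_eq {α β : Type} [Fintype β] (G : SimpleGraph α)
    (f : α → β) (hf : ∀ u v, u ≠ v → f u = f v → G.Adj u v) {t : Finset α}
    (ht : IsIndepFinset G t) :
    #t ≤ Fintype.card β := by
  rw [← Finset.card_univ]
  refine Finset.card_le_card_of_injOn f (fun _ _ ↦ Finset.mem_univ _) fun u hu v hv huv ↦ ?_
  by_contra hne
  exact ht u hu v hv (hf u v hne huv)

section InducedEdgeCount

variable {α : Type} [Fintype α] [DecidableEq α] (G : SimpleGraph α) [DecidableRel G.Adj]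

theorem inducedEdgeCount_eq_card_edgeFinset_inter_sym2 (t : Finset α) :
    inducedEdgeCount G t = #(G.edgeFinset ∩ t.sym2) := by
  rw [inducedEdgeCount, Nat.card_eq_fintype_card, ← edgeFinset_card,
    ← card_filter_edgeFinset_toFinset_subset, filter_edgeFinset_toFinset_subset]

theorem inducedEdgeCount_union_le_card_mul_card {V₁ V₂ : Finset α}
    (h₁ : IsIndepFinset G V₁) (h₂ : IsIndepFinset G V₂) :
    inducedEdgeCount G (V₁ ∪ V₂) ≤ #V₁ * #V₂ := by
  rw [inducedEdgeCount_eq_card_edgeFinset_inter_sym2, ← Finset.card_product]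
  refine (Finset.card_le_card ?_).trans
    (Finset.card_image_le (s := V₁ ×ˢ V₂) (f := fun p ↦ s(p.1, p.2)))
  intro e he
  induction e using Sym2.ind with
  | _ x y =>
    simp only [Finset.mem_inter, mem_edgeFinset, mem_edgeSet, Finset.mk_mem_sym2_iff,
      Finset.mem_union] at he
    obtain ⟨hxy, hx₁ | hx₂, hy₁ | hy₂⟩ := he
    · exact absurd hxy (h₁ x hx₁ y hy₁)
    · exact Finset.mem_image.2 ⟨(x, y), Finset.mk_mem_product hx₁ hy₂, rfl⟩
    · exact Finset.mem_image.2 ⟨(y, x), Finset.mk_mem_product hy₁ hx₂, Sym2.eq_swap⟩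
    · exact absurd hxy (h₂ x hx₂ y hy₂)

theorem card_mul_card_le_inducedEdgeCount_union {V₁ V₂ : Finset α}
    (hadj : ∀ a ∈ V₁, ∀ b ∈ V₂, G.Adj a b) :
    #V₁ * #V₂ ≤ inducedEdgeCount G (V₁ ∪ V₂) := by
  rw [inducedEdgeCount_eq_card_edgeFinset_inter_sym2, ← Finset.card_product]
  have hinj : Set.InjOn (fun p : α × α ↦ s(p.1, p.2)) (V₁ ×ˢ V₂ : Finset (α × α)) := by
    rintro ⟨a, b⟩ hab ⟨a', b'⟩ hab' h
    simp only [Finset.coe_product, Set.mem_prod, Finset.mem_coe] at hab hab'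
    rcases Sym2.eq_iff.1 h with ⟨rfl, rfl⟩ | ⟨rfl, -⟩
    · rfl
    · exact absurd (hadj a hab.1 a hab'.2) G.irrefl
  rw [← Finset.card_image_of_injOn hinj]
  refine Finset.card_le_card fun e he ↦ ?_
  obtain ⟨⟨a, b⟩, hab, rfl⟩ := Finset.mem_image.1 he
  rw [Finset.mem_product] at hab
  simp only [Finset.mem_inter, mem_edgeFinset, mem_edgeSet, Finset.mk_mem_sym2_iff,
    Finset.mem_union]
  exact ⟨hadj a hab.1 b hab.2, Or.inl hab.1, Or.inr hab.2⟩

theorem inducedEdgeCount_union_div_sqrt_le {k : ℕ} (hk : ∀ t, IsIndepFinset G t → #t ≤ k)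
    {V₁ V₂ : Finset α} (h₁ : IsIndepFinset G V₁) (h₂ : IsIndepFinset G V₂) :
    (inducedEdgeCount G (V₁ ∪ V₂) : ℝ) / √((#V₁ : ℝ) * #V₂) ≤ k := by
  have hE : (inducedEdgeCount G (V₁ ∪ V₂) : ℝ) ≤ (#V₁ : ℝ) * #V₂ := by
    exact_mod_cast inducedEdgeCount_union_le_card_mul_card G h₁ h₂
  have hcard : (#V₁ : ℝ) * #V₂ ≤ (k : ℝ) * k := by
    exact_mod_cast Nat.mul_le_mul (hk V₁ h₁) (hk V₂ h₂)
  calc (inducedEdgeCount G (V₁ ∪ V₂) : ℝ) / √((#V₁ : ℝ) * #V₂)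
      ≤ (#V₁ : ℝ) * #V₂ / √((#V₁ : ℝ) * #V₂) := by gcongr
    _ = √((#V₁ : ℝ) * #V₂) := Real.div_sqrt
    _ ≤ √((k : ℝ) * k) := Real.sqrt_le_sqrt hcard
    _ = k := Real.sqrt_mul_self k.cast_nonneg

end InducedEdgeCount

section Eta

variable {α : Type} [Fintype α] [DecidableEq α] (G : SimpleGraph α)

theorem eta_le_of_forall_card_le {k : ℕ} (hk : ∀ t, IsIndepFinset G t → #t ≤ k) :
    eta G ≤ k := by
  classical
  refine Real.sSup_le ?_ k.cast_nonneg
  rintro _ ⟨V₁, V₂, -, -, -, h₁, h₂, rfl⟩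
  exact inducedEdgeCount_union_div_sqrt_le G hk h₁ h₂

theorem sqrt_card_mul_card_le_eta {V₁ V₂ : Finset α} (hne₁ : V₁.Nonempty)
    (hne₂ : V₂.Nonempty) (h₁ : IsIndepFinset G V₁) (h₂ : IsIndepFinset G V₂)
    (hadj : ∀ a ∈ V₁, ∀ b ∈ V₂, G.Adj a b) :
    √((#V₁ : ℝ) * #V₂) ≤ eta G := by
  classical
  have hdisj : Disjoint V₁ V₂ :=
    Finset.disjoint_left.2 fun a ha₁ ha₂ ↦ G.irrefl (hadj a ha₁ a ha₂)
  have hE : (#V₁ : ℝ) * #V₂ ≤ inducedEdgeCount G (V₁ ∪ V₂) := by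
    exact_mod_cast card_mul_card_le_inducedEdgeCount_union G hadj
  calc √((#V₁ : ℝ) * #V₂) = (#V₁ : ℝ) * #V₂ / √((#V₁ : ℝ) * #V₂) := Real.div_sqrt.symm
    _ ≤ (inducedEdgeCount G (V₁ ∪ V₂) : ℝ) / √((#V₁ : ℝ) * #V₂) := by gcongr
    _ ≤ eta G := le_csSup ⟨Fintype.card α, ?_⟩ ⟨V₁, V₂, hne₁, hne₂, hdisj, h₁, h₂, rfl⟩
  rintro _ ⟨W₁, W₂, -, -, -, hW₁, hW₂, rfl⟩
  exact inducedEdgeCount_union_div_sqrt_le G (fun t _ ↦ t.card_le_univ) hW₁ hW₂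

end Eta

theorem paperGraphH_adj_of_ne_of_fst_eq {s : ℕ} {u v : (Fin 2 × Fin s) ⊕ (Fin 2 × Fin s)}
    (hne : u ≠ v) (h : Sum.elim Prod.fst Prod.fst u = Sum.elim Prod.fst Prod.fst v) :
    (paperGraphH s).Adj u v := by
  rcases u with ⟨i, j⟩ | ⟨i, j⟩ <;> rcases v with ⟨i', j'⟩ | ⟨i', j'⟩ <;>
    simp_all [paperGraphH, graphJoin, twoComplete]

theorem card_le_two_of_isIndepFinset_paperGraphH {s : ℕ}
    {t : Finset ((Fin 2 × Fin s) ⊕ (Fin 2 × Fin s))} (ht : IsIndepFinset (paperGraphH s) t) :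
    #t ≤ 2 :=
  ht.card_le_of_adj_of_map_eq _ (Sum.elim Prod.fst Prod.fst)
    (fun _ _ ↦ paperGraphH_adj_of_ne_of_fst_eq)

theorem two_le_eta_paperGraphH {s : ℕ} (hs : 1 ≤ s) : 2 ≤ eta (paperGraphH s) := by
  let z : Fin s := ⟨0, hs⟩
  have h := sqrt_card_mul_card_le_eta (paperGraphH s)
    (V₁ := {Sum.inl (0, z), Sum.inl (1, z)}) (V₂ := {Sum.inr (0, z), Sum.inr (1, z)})
    (by simp) (by simp) (by simp [IsIndepFinset, paperGraphH, graphJoin, twoComplete])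
    (by simp [IsIndepFinset, paperGraphH, graphJoin, twoComplete])
    (by simp [paperGraphH, graphJoin])
  norm_num at h
  exact h

/-- Example 3.4. Every induced bipartite subgraph of `Hₛ` has at
most four vertices, and `η(Hₛ) = 2`. -/
theorem paperGraphH_bipartite_small_and_eta (s : ℕ) (hs : 1 ≤ s) :
    (∀ V₁ V₂ : Finset ((Fin 2 × Fin s) ⊕ (Fin 2 × Fin s)), Disjoint V₁ V₂ →
        IsIndepFinset (paperGraphH s) V₁ → IsIndepFinset (paperGraphH s) V₂ →
        (V₁ ∪ V₂).card ≤ 4) ∧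
      eta (paperGraphH s) = 2 := by
  refine ⟨fun V₁ V₂ _ h₁ h₂ ↦ ?_, le_antisymm ?_ (two_le_eta_paperGraphH hs)⟩
  · calc #(V₁ ∪ V₂) ≤ #V₁ + #V₂ := Finset.card_union_le V₁ V₂
      _ ≤ 2 + 2 := add_le_add (card_le_two_of_isIndepFinset_paperGraphH h₁)
          (card_le_two_of_isIndepFinset_paperGraphH h₂)
  · exact_mod_cast eta_le_of_forall_card_le (paperGraphH s) fun _ ↦
      card_le_two_of_isIndepFinset_paperGraphH
end

section
/- For a positive integer s, let H_s = 2K_s * 2K_s be the join of two copies of the disjoint union of two complete graphs K_s. Then the smallest adjacency eigenvalue of H_s equals -(s+1); equivalently, λ(H_s) = -(|V(H_s)|/4 + 1). Consequently, |-η(H_s) - λ(H_s)| = s - 1, so the gap between -η(H_s) and λ(H_s) grows linearly in |V(H_s)|. -/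
/-!
Common definitions: smallest adjacency eigenvalue, independent vertex sets,
edge counts of induced subgraphs, chromatic number, independence number,
and the invariants `η`, `ι`, `θ` from the paper.
-/

open Finset SimpleGraph Matrix

set_option linter.unusedSectionVars false

variable {V : Type} [Fintype V] [DecidableEq V]

/-!
For `x = (y, z)` split along the join, `xᵀ A x = yᵀ A₁ y + zᵀ A₂ z + 2 (∑ y) (∑ z)`, and on each of
the four copies `c` of `Kₛ` the form contributes `S_c² - Q_c` (sum and sum of squares of `x` on
`c`). Cauchy–Schwarz `S_c² ≤ s Q_c` then gives
`xᵀ A x + (s + 1) xᵀ x ≥ 2 ∑ S_c² + 2 (∑ y) (∑ z) ≥ (∑ y + ∑ z)² ≥ 0`,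
and the vector that is `1` on one side of the join and `-1` on the other is an eigenvector for
`-(s + 1)`. An independent set of `Hₛ` lies on one side, in distinct copies of `Kₛ`, so it has at
most two vertices; as a bipartite graph has at most `|V₁| |V₂|` edges, every ratio in `η` is at
most `√(|V₁| |V₂|) ≤ 2`, attained by an induced `K₂,₂`. So `η(Hₛ) = 2` and the gap is `(s + 1) - 2`.
-/

namespace Matrix

variable {n : Type*} [Fintype n] {A : Matrix n n ℝ}

theorem le_of_mulVec_eq_smul {c μ : ℝ} (hc : ∀ x : n → ℝ, c * (x ⬝ᵥ x) ≤ x ⬝ᵥ (A *ᵥ x))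
    {v : n → ℝ} (hv : v ≠ 0) (hAv : A *ᵥ v = μ • v) : c ≤ μ := by
  have hpos : 0 < v ⬝ᵥ v :=
    lt_of_le_of_ne (Finset.sum_nonneg fun i _ => mul_self_nonneg (v i))
      (Ne.symm (dotProduct_self_eq_zero.not.mpr hv))
  have := hc v
  rw [hAv, dotProduct_smul, smul_eq_mul] at this
  exact le_of_mul_le_mul_right this hpos

namespace IsHermitian

variable [DecidableEq n]

theorem mem_range_eigenvalues_of_mulVec_eq_smul (hA : A.IsHermitian) {μ : ℝ} {v : n → ℝ}
    (hv : v ≠ 0) (hAv : A *ᵥ v = μ • v) : μ ∈ Set.range hA.eigenvalues := by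
  rw [← hA.spectrum_real_eq_range_eigenvalues, ← Matrix.spectrum_toLin']
  refine Module.End.hasEigenvalue_iff_mem_spectrum.mp
    (Module.End.hasEigenvalue_of_hasEigenvector (x := v) ⟨?_, hv⟩)
  rw [Module.End.mem_eigenspace_iff, Matrix.toLin'_apply, hAv]

theorem iInf_eigenvalues_eq (hA : A.IsHermitian) {μ : ℝ}
    (hμ : ∀ x : n → ℝ, μ * (x ⬝ᵥ x) ≤ x ⬝ᵥ (A *ᵥ x))
    {v : n → ℝ} (hv : v ≠ 0) (hAv : A *ᵥ v = μ • v) : ⨅ i, hA.eigenvalues i = μ := by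
  obtain ⟨i, hi⟩ := hA.mem_range_eigenvalues_of_mulVec_eq_smul hv hAv
  have : Nonempty n := ⟨i⟩
  refine le_antisymm (hi ▸ ciInf_le (Set.finite_range _).bddBelow i) (le_ciInf fun j => ?_)
  exact le_of_mulVec_eq_smul hμ
    ((WithLp.ofLp_eq_zero 2).ne.2 (hA.eigenvectorBasis.orthonormal.ne_zero j))
    (hA.mulVec_eigenvectorBasis j)

end IsHermitian

end Matrix

section graphJoin

variable {α β : Type} (G₁ : SimpleGraph α) (G₂ : SimpleGraph β)

@[simp] theorem graphJoin_adj_inl_inl {a a' : α} :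
    (graphJoin G₁ G₂).Adj (.inl a) (.inl a') ↔ G₁.Adj a a' := Iff.rfl

@[simp] theorem graphJoin_adj_inr_inr {b b' : β} :
    (graphJoin G₁ G₂).Adj (.inr b) (.inr b') ↔ G₂.Adj b b' := Iff.rfl

@[simp] theorem graphJoin_adj_inl_inr {a : α} {b : β} :
    (graphJoin G₁ G₂).Adj (.inl a) (.inr b) := trivial

@[simp] theorem graphJoin_adj_inr_inl {a : α} {b : β} :
    (graphJoin G₁ G₂).Adj (.inr b) (.inl a) := trivial

variable [Fintype α] [Fintype β] [hJ : DecidableRel (graphJoin G₁ G₂).Adj]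

theorem graphJoin_adjMatrix_mulVec_inl [DecidableRel G₁.Adj] (x : α ⊕ β → ℝ) (a : α) :
    ((graphJoin G₁ G₂).adjMatrix ℝ *ᵥ x) (.inl a) =
      (G₁.adjMatrix ℝ *ᵥ (x ∘ .inl)) a + ∑ b, x (.inr b) := by
  simp [mulVec, dotProduct, Fintype.sum_sum_type]

theorem graphJoin_adjMatrix_mulVec_inr [DecidableRel G₂.Adj] (x : α ⊕ β → ℝ) (b : β) :
    ((graphJoin G₁ G₂).adjMatrix ℝ *ᵥ x) (.inr b) =
      (G₂.adjMatrix ℝ *ᵥ (x ∘ .inr)) b + ∑ a, x (.inl a) := by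
  simp [mulVec, dotProduct, Fintype.sum_sum_type, add_comm]

theorem graphJoin_dotProduct_adjMatrix_mulVec [DecidableRel G₁.Adj] [DecidableRel G₂.Adj]
    (x : α ⊕ β → ℝ) :
    x ⬝ᵥ ((graphJoin G₁ G₂).adjMatrix ℝ *ᵥ x) =
      (x ∘ .inl) ⬝ᵥ (G₁.adjMatrix ℝ *ᵥ (x ∘ .inl)) + (x ∘ .inr) ⬝ᵥ (G₂.adjMatrix ℝ *ᵥ (x ∘ .inr))
        + 2 * (∑ a, x (.inl a)) * ∑ b, x (.inr b) := by
  simp only [dotProduct, Fintype.sum_sum_type, graphJoin_adjMatrix_mulVec_inl,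
    graphJoin_adjMatrix_mulVec_inr, Function.comp_apply, mul_add, Finset.sum_add_distrib,
    ← Finset.sum_mul]
  ring

end graphJoin

section twoComplete

variable {s : ℕ}

@[simp] theorem twoComplete_adj {u v : Fin 2 × Fin s} :
    (twoComplete s).Adj u v ↔ u.1 = v.1 ∧ u.2 ≠ v.2 := Iff.rfl

instance : DecidableRel (twoComplete s).Adj :=
  fun u v => inferInstanceAs (Decidable (u.1 = v.1 ∧ u.2 ≠ v.2))

theorem twoComplete_adjMatrix_mulVec_apply (y : Fin 2 × Fin s → ℝ) (i : Fin 2) (j : Fin s) :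
    ((twoComplete s).adjMatrix ℝ *ᵥ y) (i, j) = ∑ k, y (i, k) - y (i, j) := by
  simp only [mulVec, dotProduct, adjMatrix_apply, twoComplete_adj, ite_mul, one_mul, zero_mul,
    Fintype.sum_prod_type, ite_and]
  rw [Finset.sum_comm]
  simp only [Finset.sum_ite_eq, Finset.mem_univ, if_true]
  rw [← Finset.sum_filter, Finset.filter_ne, Finset.sum_erase_eq_sub (Finset.mem_univ j)]

theorem twoComplete_adjMatrix_mulVec_one :
    (twoComplete s).adjMatrix ℝ *ᵥ 1 = ((s : ℝ) - 1) • 1 := by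
  ext ⟨i, j⟩
  rw [twoComplete_adjMatrix_mulVec_apply]
  simp

theorem twoComplete_dotProduct_adjMatrix_mulVec (y : Fin 2 × Fin s → ℝ) :
    y ⬝ᵥ ((twoComplete s).adjMatrix ℝ *ᵥ y) =
      ∑ i, ((∑ j, y (i, j)) ^ 2 - ∑ j, y (i, j) ^ 2) := by
  simp only [dotProduct, Fintype.sum_prod_type, twoComplete_adjMatrix_mulVec_apply, mul_sub,
    sq, Finset.sum_sub_distrib, Finset.sum_mul]

theorem sq_sum_le_twoComplete_quadForm (y : Fin 2 × Fin s → ℝ) :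
    (∑ u, y u) ^ 2 ≤ y ⬝ᵥ ((twoComplete s).adjMatrix ℝ *ᵥ y) + ((s : ℝ) + 1) * (y ⬝ᵥ y) := by
  have hcs (i : Fin 2) : (∑ j, y (i, j)) ^ 2 ≤ s * ∑ j, y (i, j) ^ 2 := by
    simpa using sq_sum_le_card_mul_sum_sq (s := univ) (f := fun j => y (i, j))
  have hyy : y ⬝ᵥ y = ∑ i, ∑ j, y (i, j) ^ 2 := by
    simp [dotProduct, Fintype.sum_prod_type, sq]
  rw [twoComplete_dotProduct_adjMatrix_mulVec, hyy, Fintype.sum_prod_type]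
  simp only [Fin.sum_univ_two] at hcs ⊢
  nlinarith [hcs 0, hcs 1, sq_nonneg (∑ j, y (0, j) - ∑ j, y (1, j))]

end twoComplete

section paperGraphH

variable {s : ℕ} [DecidableRel (paperGraphH s).Adj]

theorem paperGraphH_quadForm_ge (x : (Fin 2 × Fin s) ⊕ (Fin 2 × Fin s) → ℝ) :
    -((s : ℝ) + 1) * (x ⬝ᵥ x) ≤ x ⬝ᵥ ((paperGraphH s).adjMatrix ℝ *ᵥ x) := by
  have hjoin := graphJoin_dotProduct_adjMatrix_mulVec (twoComplete s) (twoComplete s)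
    (hJ := ‹DecidableRel (paperGraphH s).Adj›) x
  have hxx : x ⬝ᵥ x = (x ∘ .inl) ⬝ᵥ (x ∘ .inl) + (x ∘ .inr) ⬝ᵥ (x ∘ .inr) := by
    rw [← sumElim_dotProduct_sumElim, Sum.elim_comp_inl_inr]
  have hl := sq_sum_le_twoComplete_quadForm (x ∘ .inl)
  have hr := sq_sum_le_twoComplete_quadForm (x ∘ .inr)
  simp only [Function.comp_apply] at hl hr
  erw [hjoin]
  rw [hxx]
  nlinarith [sq_nonneg (∑ a, x (.inl a) + ∑ b, x (.inr b))]

theorem paperGraphH_adjMatrix_mulVec_sumElim :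
    (paperGraphH s).adjMatrix ℝ *ᵥ Sum.elim (1 : Fin 2 × Fin s → ℝ) (-1) =
      -((s : ℝ) + 1) • Sum.elim (1 : Fin 2 × Fin s → ℝ) (-1) := by
  have hcard : ∑ _ : Fin 2 × Fin s, (1 : ℝ) = 2 * s := by simp
  ext (u | u)
  · have := graphJoin_adjMatrix_mulVec_inl (twoComplete s) (twoComplete s)
      (hJ := ‹DecidableRel (paperGraphH s).Adj›) (Sum.elim (1 : Fin 2 × Fin s → ℝ) (-1)) u
    rw [Sum.elim_comp_inl, twoComplete_adjMatrix_mulVec_one] at this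
    erw [this]
    simp only [Sum.elim_inl, Sum.elim_inr, Pi.smul_apply, Pi.one_apply, Pi.neg_apply,
      smul_eq_mul, sum_neg_distrib, hcard]
    ring
  · have := graphJoin_adjMatrix_mulVec_inr (twoComplete s) (twoComplete s)
      (hJ := ‹DecidableRel (paperGraphH s).Adj›) (Sum.elim (1 : Fin 2 × Fin s → ℝ) (-1)) u
    rw [Sum.elim_comp_inr, mulVec_neg, twoComplete_adjMatrix_mulVec_one] at this
    erw [this]
    simp only [Sum.elim_inl, Sum.elim_inr, Pi.smul_apply, Pi.one_apply, Pi.neg_apply,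
      smul_eq_mul, hcard]
    ring

end paperGraphH

theorem lambdaMin_paperGraphH {s : ℕ} (hs : 1 ≤ s) :
    lambdaMin (paperGraphH s) = -((s : ℝ) + 1) := by
  classical
  refine (adj_isHermitian _).iInf_eigenvalues_eq paperGraphH_quadForm_ge ?_
    paperGraphH_adjMatrix_mulVec_sumElim
  intro h
  simpa using congrFun h (.inl (0, ⟨0, hs⟩))

section eta

variable {W : Type} [DecidableEq W] (G : SimpleGraph W)

theorem inducedEdgeCount_union_eq_card_adj [DecidableRel G.Adj] {V₁ V₂ : Finset W}
    (h₁ : IsIndepFinset G V₁) (h₂ : IsIndepFinset G V₂) :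
    inducedEdgeCount G (V₁ ∪ V₂) = #{p ∈ V₁ ×ˢ V₂ | G.Adj p.1 p.2} := by
  have mem (p) (hp : p ∈ {p ∈ V₁ ×ˢ V₂ | G.Adj p.1 p.2}) :
      p.1 ∈ V₁ ∧ p.2 ∈ V₂ ∧ G.Adj p.1 p.2 := by
    simpa [and_assoc] using hp
  let f : {p // p ∈ {p ∈ V₁ ×ˢ V₂ | G.Adj p.1 p.2}} → (G.induce ↑(V₁ ∪ V₂)).edgeSet :=
    fun p => ⟨s(⟨p.1.1, by simp [(mem _ p.2).1]⟩, ⟨p.1.2, by simp [(mem _ p.2).2.1]⟩),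
      (mem _ p.2).2.2⟩
  rw [inducedEdgeCount, ← Nat.card_eq_finsetCard]
  refine (Nat.card_eq_of_bijective f ⟨?_, ?_⟩).symm
  · rintro ⟨⟨a, b⟩, hab⟩ ⟨⟨a', b'⟩, hab'⟩ h
    obtain ⟨ha, hb, hadj⟩ := mem _ hab
    obtain ⟨ha', -, -⟩ := mem _ hab'
    replace h := congrArg Subtype.val h
    simp only [f, Sym2.eq_iff, Subtype.mk.injEq] at h
    rcases h with ⟨rfl, rfl⟩ | ⟨rfl, rfl⟩
    · rfl
    · exact absurd hadj (h₁ _ ha _ ha')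
  · rintro ⟨e, he⟩
    induction e using Sym2.ind with
    | _ a b =>
      have hab : G.Adj a b := he
      obtain ⟨a, ha⟩ := a
      obtain ⟨b, hb⟩ := b
      simp only [coe_union, Set.mem_union, mem_coe] at ha hb
      rcases ha with ha | ha <;> rcases hb with hb | hb
      · exact absurd hab (h₁ _ ha _ hb)
      · exact ⟨⟨(a, b), by simp [ha, hb, hab]⟩, rfl⟩
      · exact ⟨⟨(b, a), by simp [ha, hb, hab.symm]⟩, Subtype.ext Sym2.eq_swap⟩
      · exact absurd hab (h₂ _ ha _ hb)

theorem inducedEdgeCount_div_sqrt_le {k : ℕ} (hk : ∀ t, IsIndepFinset G t → #t ≤ k)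
    {V₁ V₂ : Finset W} (hne₁ : V₁.Nonempty) (hne₂ : V₂.Nonempty)
    (h₁ : IsIndepFinset G V₁) (h₂ : IsIndepFinset G V₂) :
    (inducedEdgeCount G (V₁ ∪ V₂) : ℝ) / √((#V₁ : ℝ) * #V₂) ≤ k := by
  classical
  have hedges : (inducedEdgeCount G (V₁ ∪ V₂) : ℝ) ≤ (#V₁ : ℝ) * #V₂ := by
    have := (card_filter_le (V₁ ×ˢ V₂) fun p => G.Adj p.1 p.2).trans (card_product V₁ V₂).le
    rw [inducedEdgeCount_union_eq_card_adj G h₁ h₂]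
    exact_mod_cast this
  set m : ℝ := (#V₁ : ℝ) * #V₂
  have hm : 0 < m := by have := hne₁.card_pos; have := hne₂.card_pos; positivity
  have hsqrt : √m ≤ k := by
    rw [Real.sqrt_le_iff]
    refine ⟨k.cast_nonneg, ?_⟩
    have := hk _ h₁
    have := hk _ h₂
    simp only [m, sq]
    gcongr
  rw [div_le_iff₀ (Real.sqrt_pos.mpr hm)]
  calc (inducedEdgeCount G (V₁ ∪ V₂) : ℝ) ≤ m := hedges
    _ = √m * √m := (Real.mul_self_sqrt hm.le).symm
    _ ≤ k * √m := by gcongr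

theorem eta_eq_of_forall_isIndepFinset_card_le {k : ℕ} (hk0 : 0 < k)
    (hk : ∀ t, IsIndepFinset G t → #t ≤ k) {V₁ V₂ : Finset W} (h₁ : IsIndepFinset G V₁) (h₂ : IsIndepFinset G V₂)
    (hcard₁ : #V₁ = k) (hcard₂ : #V₂ = k) (hadj : ∀ a ∈ V₁, ∀ b ∈ V₂, G.Adj a b) :
    eta G = k := by
  classical
  have hle : ∀ x ∈ {x : ℝ | ∃ V₁ V₂ : Finset W, V₁.Nonempty ∧ V₂.Nonempty ∧ Disjoint V₁ V₂ ∧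
      IsIndepFinset G V₁ ∧ IsIndepFinset G V₂ ∧
      x = (inducedEdgeCount G (V₁ ∪ V₂) : ℝ) / √((#V₁ : ℝ) * #V₂)}, x ≤ k := by
    rintro _ ⟨V₁, V₂, hne₁, hne₂, -, h₁, h₂, rfl⟩
    exact inducedEdgeCount_div_sqrt_le G hk hne₁ hne₂ h₁ h₂
  have hedges : inducedEdgeCount G (V₁ ∪ V₂) = k * k := by
    rw [inducedEdgeCount_union_eq_card_adj G h₁ h₂, filter_true_of_mem, card_product, hcard₁,
      hcard₂]
    rintro ⟨a, b⟩ hab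
    rw [mem_product] at hab
    exact hadj a hab.1 b hab.2
  refine le_antisymm (Real.sSup_le hle k.cast_nonneg) (le_csSup ⟨k, hle⟩ ⟨V₁, V₂,
    card_pos.mp (hcard₁ ▸ hk0), card_pos.mp (hcard₂ ▸ hk0),
    disjoint_left.mpr fun a ha₁ ha₂ => G.irrefl (hadj a ha₁ a ha₂), h₁, h₂, ?_⟩)
  rw [hedges, hcard₁, hcard₂, Nat.cast_mul, Real.sqrt_mul_self k.cast_nonneg,
    mul_div_cancel_right₀ _ (by positivity)]

end eta

theorem eta_paperGraphH {s : ℕ} (hs : 1 ≤ s) : eta (paperGraphH s) = 2 := by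
  let T : Finset (Fin 2 × Fin s) := univ ×ˢ {⟨0, hs⟩}
  have hT : #T = 2 := by simp [T]
  have hindep {ι : Fin 2 × Fin s ↪ (Fin 2 × Fin s) ⊕ (Fin 2 × Fin s)}
      (hι : ∀ u v, (paperGraphH s).Adj (ι u) (ι v) → (twoComplete s).Adj u v) :
      IsIndepFinset (paperGraphH s) (T.map ι) := by
    simp only [IsIndepFinset, mem_map]
    rintro _ ⟨u, hu, rfl⟩ _ ⟨v, hv, rfl⟩ huv
    simp only [T, mem_product, mem_singleton] at hu hv
    exact (hι u v huv).2 (hu.2.trans hv.2.symm)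
  have hcross : ∀ a ∈ T.map .inl, ∀ b ∈ T.map .inr, (paperGraphH s).Adj a b := by
    simp only [mem_map]
    rintro _ ⟨u, -, rfl⟩ _ ⟨v, -, rfl⟩
    trivial
  exact_mod_cast eta_eq_of_forall_isIndepFinset_card_le (paperGraphH s) two_pos
    (fun _ => card_le_two_of_isIndepFinset_paperGraphH)
    (hindep (ι := .inl) fun _ _ => id) (hindep (ι := .inr) fun _ _ => id)
    (by rw [card_map, hT]) (by rw [card_map, hT]) hcross

/-- Example 3.4. `λ(Hₛ) = -(s+1) = -(|V(Hₛ)|/4 + 1)`, and consequently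
`|-η(Hₛ) - λ(Hₛ)| = s - 1`, a gap growing linearly in `|V(Hₛ)|`. -/
theorem paperGraphH_lambdaMin_and_gap (s : ℕ) (hs : 1 ≤ s) :
    lambdaMin (paperGraphH s) = -((s : ℝ) + 1) ∧
      lambdaMin (paperGraphH s) =
        -((Fintype.card ((Fin 2 × Fin s) ⊕ (Fin 2 × Fin s)) : ℝ) / 4 + 1) ∧
      |(-eta (paperGraphH s)) - lambdaMin (paperGraphH s)| = (s : ℝ) - 1 := by
  have hlam := lambdaMin_paperGraphH hs
  have hs' : (1 : ℝ) ≤ s := by exact_mod_cast hs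
  refine ⟨hlam, ?_, ?_⟩
  · rw [hlam, Fintype.card_sum, Fintype.card_prod]
    simp only [Fintype.card_fin, Nat.cast_add, Nat.cast_mul, Nat.cast_ofNat]
    ring
  · rw [hlam, eta_paperGraphH hs, abs_of_nonneg (by linarith)]
    ring
end
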